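/- Covering number comparison for the hull: if L(ε) is an inclusion length of Ω_ε(f) and N_ε^{a.p.} denotes the minimal number of ε-balls needed to cover {f_s : s ∈ [-L(ε/2), L(ε/2)]}, then N_{2ε}^{a.p.} ≤ N_ε(H(f)) ≤ N_{ε/2}^{a.p.}, and consequently the lower and upper box dimensions of H(f) equal liminf resp. limsup of ln N_ε^{a.p.} / ln(1/ε). -/
import Mathlib

open Filter Topology

/-- The s-translate f_s of a bounded continuous function, f_s(t) = f(t+s). -/
noncomputable def translateBCF (f : BoundedContinuousFunction ℝ ℂ) (s : ℝ) :
    BoundedContinuousFunction ℝ ℂ :=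
  f.compContinuous ⟨fun t => t + s, by continuity⟩

/-- The hull of f: the sup-norm closure of the set of translates of f. -/
noncomputable def hull (f : BoundedContinuousFunction ℝ ℂ) :
    Set (BoundedContinuousFunction ℝ ℂ) :=
  closure (Set.range (translateBCF f))

/-- Minimal number of closed ε-balls with centres in S needed to cover S. -/
noncomputable def coverNumSet {E : Type*} [PseudoMetricSpace E] (S : Set E) (ε : ℝ) : ℕ :=
  sInf {n : ℕ | ∃ s : Finset E, s.card = n ∧ ↑s ⊆ S ∧ ∀ x ∈ S, ∃ c ∈ s, dist x c ≤ ε}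

/-- Lower box-counting (fractal) dimension of a set in a metric space. -/
noncomputable def lowerBoxDimSet {E : Type*} [PseudoMetricSpace E] (S : Set E) : ℝ :=
  liminf (fun ε : ℝ => Real.log (coverNumSet S ε) / Real.log (1 / ε)) (𝓝[>] 0)

/-- Upper box-counting (fractal) dimension of a set in a metric space. -/
noncomputable def upperBoxDimSet {E : Type*} [PseudoMetricSpace E] (S : Set E) : ℝ :=
  limsup (fun ε : ℝ => Real.log (coverNumSet S ε) / Real.log (1 / ε)) (𝓝[>] 0)

/-- N_ε^{a.p.}: minimal number of ε-balls with centres in the set of translates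
{f_s : s ∈ [-L(ε/2), L(ε/2)]} needed to cover that set. -/
noncomputable def Nap (f : BoundedContinuousFunction ℝ ℂ) (L : ℝ → ℝ) (ε : ℝ) : ℕ :=
  coverNumSet (translateBCF f '' Set.Icc (-L (ε / 2)) (L (ε / 2))) ε

/-! ### Auxiliary lemmas -/

lemma translateBCF_apply (f : BoundedContinuousFunction ℝ ℂ) (s t : ℝ) :
    translateBCF f s t = f (t + s) := rfl

lemma dist_translate (f : BoundedContinuousFunction ℝ ℂ) (a b : ℝ) :
    dist (translateBCF f a) (translateBCF f b) = dist (translateBCF f (a - b)) f := by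
  apply le_antisymm
  · rw [BoundedContinuousFunction.dist_le dist_nonneg]
    intro t
    have h1 : translateBCF f a t = translateBCF f (a - b) (t + b) := by
      rw [translateBCF_apply, translateBCF_apply]; ring_nf
    have h2 : translateBCF f b t = f (t + b) := rfl
    rw [h1, h2]
    exact BoundedContinuousFunction.dist_coe_le_dist _
  · rw [BoundedContinuousFunction.dist_le dist_nonneg]
    intro t
    have h1 : translateBCF f (a - b) t = translateBCF f a (t - b) := by
      rw [translateBCF_apply, translateBCF_apply]; ring_nf
    have h2 : f t = translateBCF f b (t - b) := by
      rw [translateBCF_apply]; ring_nf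
    rw [h1, h2]
    exact BoundedContinuousFunction.dist_coe_le_dist _

section APLemmas
variable (f : BoundedContinuousFunction ℝ ℂ) (L : ℝ → ℝ)
  (hL : ∀ ε > (0 : ℝ), ∀ a : ℝ, ∃ τ ∈ Set.Icc a (a + L ε), dist (translateBCF f τ) f < ε)

include hL

lemma L_nonneg {ε : ℝ} (hε : 0 < ε) : 0 ≤ L ε := by
  obtain ⟨τ, hτ, -⟩ := hL ε hε 0
  simpa using le_trans hτ.1 hτ.2

lemma translate_dense {ε : ℝ} (hε : 0 < ε) (s : ℝ) :
    ∃ u ∈ Set.Icc (-L ε) (L ε), dist (translateBCF f s) (translateBCF f u) < ε := by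
  obtain ⟨τ, hτ, hd⟩ := hL ε hε (-s)
  refine ⟨s + τ, ⟨?_, ?_⟩, ?_⟩
  · have h0 : 0 ≤ s + τ := by linarith [hτ.1]
    linarith [L_nonneg f L hL hε]
  · linarith [hτ.2]
  · rw [dist_comm, dist_translate]
    simpa using hd

lemma f_uc {ε : ℝ} (hε : 0 < ε) :
    ∃ δ > (0:ℝ), ∀ x y : ℝ, dist x y < δ → dist (f x) (f y) < ε := by
  have hε3 : 0 < ε / 3 := by linarith
  set ℓ := L (ε / 3) with hℓdef
  have hℓ : 0 ≤ ℓ := L_nonneg f L hL hε3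
  have huc : UniformContinuousOn f (Set.Icc (-1) (ℓ + 1)) :=
    isCompact_Icc.uniformContinuousOn_of_continuous f.continuous.continuousOn
  obtain ⟨δ0, hδ0, hδ0'⟩ := Metric.uniformContinuousOn_iff.mp huc (ε / 3) hε3
  refine ⟨min δ0 1, by positivity, fun x y hxy => ?_⟩
  obtain ⟨τ, hτ, hd⟩ := hL (ε / 3) hε3 (-x)
  have hxτ : x + τ ∈ Set.Icc (-1:ℝ) (ℓ + 1) := by
    constructor <;> [skip; skip] <;> [linarith [hτ.1]; linarith [hτ.2]]
  have hyx : |y - x| < 1 := by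
    have := lt_of_lt_of_le hxy (min_le_right _ _)
    rwa [Real.dist_eq, abs_sub_comm] at this
  have hyτ : y + τ ∈ Set.Icc (-1:ℝ) (ℓ + 1) := by
    rw [abs_lt] at hyx
    constructor <;> [linarith [hτ.1]; linarith [hτ.2]]
  have h1 : dist (f (x + τ)) (f x) < ε / 3 := by
    calc dist (f (x + τ)) (f x) = dist (translateBCF f τ x) (f x) := rfl
      _ ≤ dist (translateBCF f τ) f := BoundedContinuousFunction.dist_coe_le_dist _
      _ < ε / 3 := hd
  have h2 : dist (f (y + τ)) (f y) < ε / 3 := by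
    calc dist (f (y + τ)) (f y) = dist (translateBCF f τ y) (f y) := rfl
      _ ≤ dist (translateBCF f τ) f := BoundedContinuousFunction.dist_coe_le_dist _
      _ < ε / 3 := hd
  have h3 : dist (f (x + τ)) (f (y + τ)) < ε / 3 := by
    apply hδ0' _ hxτ _ hyτ
    have : dist (x + τ) (y + τ) = dist x y := by
      rw [Real.dist_eq, Real.dist_eq]; ring_nf
    rw [this]
    exact lt_of_lt_of_le hxy (min_le_left _ _)
  calc dist (f x) (f y) ≤ dist (f x) (f (x + τ)) + dist (f (x + τ)) (f (y + τ))
        + dist (f (y + τ)) (f y) := dist_triangle4 _ _ _ _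
    _ < ε / 3 + ε / 3 + ε / 3 := by rw [dist_comm (f x)]; linarith
    _ = ε := by ring

lemma translate_continuous : Continuous (translateBCF f) := by
  rw [Metric.continuous_iff]
  intro b ε hε
  obtain ⟨δ, hδ, hδ'⟩ := f_uc f L hL (half_pos hε)
  refine ⟨δ, hδ, fun a ha => ?_⟩
  have : dist (translateBCF f a) (translateBCF f b) ≤ ε / 2 := by
    rw [dist_translate, BoundedContinuousFunction.dist_le (by linarith)]
    intro t
    have : dist (t + (a - b)) t < δ := by
      rw [Real.dist_eq] at ha ⊢
      simpa using ha
    exact le_of_lt (hδ' _ _ this)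
  linarith

end APLemmas

lemma coverSet_nonempty_of_compact {E : Type*} [PseudoMetricSpace E] {S : Set E}
    (hS : IsCompact S) {ε : ℝ} (hε : 0 < ε) :
    {n : ℕ | ∃ s : Finset E, s.card = n ∧ ↑s ⊆ S ∧ ∀ x ∈ S, ∃ c ∈ s, dist x c ≤ ε}.Nonempty := by
  classical
  obtain ⟨t, htS, htfin, htcov⟩ := hS.elim_finite_subcover_image
    (fun x (_ : x ∈ S) => Metric.isOpen_ball (x := x) (ε := ε))
    (fun x hx => Set.mem_biUnion hx (Metric.mem_ball_self hε))
  refine ⟨htfin.toFinset.card, htfin.toFinset, rfl, ?_, ?_⟩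
  · intro c hc; exact htS (by simpa using hc)
  · intro x hx
    obtain ⟨c, hc, hxc⟩ := Set.mem_iUnion₂.mp (htcov hx)
    exact ⟨c, by simpa using hc, le_of_lt hxc⟩

lemma coverNum_le {E : Type*} [PseudoMetricSpace E] {S : Set E} {ε : ℝ} (s : Finset E)
    (h1 : ↑s ⊆ S) (h2 : ∀ x ∈ S, ∃ c ∈ s, dist x c ≤ ε) : coverNumSet S ε ≤ s.card :=
  Nat.sInf_le ⟨s, rfl, h1, h2⟩

lemma T_subset_hull {f : BoundedContinuousFunction ℝ ℂ} (r : ℝ) :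
    translateBCF f '' Set.Icc (-r) r ⊆ hull f :=
  fun _ ⟨s, _, hs⟩ => subset_closure ⟨s, hs⟩

section CoverLemmas
variable (f : BoundedContinuousFunction ℝ ℂ) (L : ℝ → ℝ)
  (hL : ∀ ε > (0 : ℝ), ∀ a : ℝ, ∃ τ ∈ Set.Icc a (a + L ε), dist (translateBCF f τ) f < ε)
include hL

lemma T_compact (r : ℝ) : IsCompact (translateBCF f '' Set.Icc (-r) r) :=
  isCompact_Icc.image (translate_continuous f L hL)

lemma hull_compact : IsCompact (hull f) := by
  rw [isCompact_iff_totallyBounded_isComplete]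
  constructor
  · apply TotallyBounded.closure
    rw [Metric.totallyBounded_iff]
    intro ε hε
    have hε2 : 0 < ε / 2 := by linarith
    have hT := (T_compact f L hL (L (ε/2))).totallyBounded
    obtain ⟨t, htfin, htcov⟩ := Metric.totallyBounded_iff.mp hT (ε/2) hε2
    refine ⟨t, htfin, ?_⟩
    rintro x ⟨s, rfl⟩
    obtain ⟨u, hu, hdu⟩ := translate_dense f L hL hε2 s
    have : translateBCF f u ∈ ⋃ y ∈ t, Metric.ball y (ε/2) :=
      htcov (Set.mem_image_of_mem _ hu)
    obtain ⟨y, hy, hdy⟩ := Set.mem_iUnion₂.mp this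
    refine Set.mem_biUnion hy ?_
    rw [Metric.mem_ball] at hdy ⊢
    calc dist (translateBCF f s) y
        ≤ dist (translateBCF f s) (translateBCF f u) + dist (translateBCF f u) y :=
          dist_triangle _ _ _
      _ < ε/2 + ε/2 := add_lt_add hdu hdy
      _ = ε := by ring
  · exact isClosed_closure.isComplete

lemma nap_le_coverNum {ε : ℝ} (hε : 0 < ε) :
    Nap f L (2 * ε) ≤ coverNumSet (hull f) ε := by
  classical
  have h2 : 2 * ε / 2 = ε := by ring
  set T := translateBCF f '' Set.Icc (-L ε) (L ε) with hT
  have hNap : Nap f L (2 * ε) = coverNumSet T (2 * ε) := by rw [Nap, h2]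
  have hTcpt : IsCompact T := T_compact f L hL _
  have hTne : T.Nonempty := by
    refine ⟨translateBCF f 0, Set.mem_image_of_mem _ ?_⟩
    have := L_nonneg f L hL hε
    constructor <;> linarith
  have hnear : ∀ c ∈ hull f, ∃ w ∈ T, dist c w ≤ ε := by
    intro c hc
    have hinf : Metric.infDist c T ≤ ε := by
      apply le_of_forall_pos_le_add
      intro δ hδ
      obtain ⟨y, ⟨s, rfl⟩, hdy⟩ := Metric.mem_closure_iff.mp hc δ hδ
      obtain ⟨u, hu, hdu⟩ := translate_dense f L hL hε s
      have hmem : translateBCF f u ∈ T := Set.mem_image_of_mem _ hu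
      calc Metric.infDist c T ≤ dist c (translateBCF f u) := Metric.infDist_le_dist_of_mem hmem
        _ ≤ dist c (translateBCF f s) + dist (translateBCF f s) (translateBCF f u) :=
            dist_triangle _ _ _
        _ ≤ δ + ε := add_le_add hdy.le hdu.le
        _ = ε + δ := by ring
    obtain ⟨w, hw, hwd⟩ := hTcpt.exists_infDist_eq_dist hTne c
    exact ⟨w, hw, hwd ▸ hinf⟩
  have hne := coverSet_nonempty_of_compact (hull_compact f L hL) hε
  obtain ⟨s, hcard, hsub, hcov⟩ := Nat.sInf_mem hne
  have hchoice : ∀ c : BoundedContinuousFunction ℝ ℂ, c ∈ (s : Set _) →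
      ∃ w, w ∈ T ∧ dist c w ≤ ε := by
    intro c hc
    obtain ⟨w, h1, h2⟩ := hnear c (hsub hc)
    exact ⟨w, h1, h2⟩
  choose g hg1 hg2 using hchoice
  let t : Finset (BoundedContinuousFunction ℝ ℂ) := s.attach.image (fun c => g c.1 c.2)
  have htT : ↑t ⊆ T := by
    intro w hw
    simp only [t, Finset.coe_image, Set.mem_image] at hw
    obtain ⟨⟨c, hc⟩, -, rfl⟩ := hw
    exact hg1 c hc
  have htcov : ∀ x ∈ T, ∃ w ∈ t, dist x w ≤ 2 * ε := by
    intro x hx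
    obtain ⟨c, hc, hxc⟩ := hcov x (T_subset_hull _ hx)
    refine ⟨g c hc, ?_, ?_⟩
    · simp only [t, Finset.mem_image]
      exact ⟨⟨c, hc⟩, s.mem_attach _, rfl⟩
    · calc dist x (g c hc) ≤ dist x c + dist c (g c hc) := dist_triangle _ _ _
        _ ≤ ε + ε := add_le_add hxc (hg2 c hc)
        _ = 2 * ε := by ring
  calc Nap f L (2 * ε) = coverNumSet T (2 * ε) := hNap
    _ ≤ t.card := coverNum_le t htT htcov
    _ ≤ s.attach.card := Finset.card_image_le
    _ = s.card := s.card_attach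
    _ = coverNumSet (hull f) ε := hcard

lemma coverNum_le_nap {ε : ℝ} (hε : 0 < ε) :
    coverNumSet (hull f) ε ≤ Nap f L (ε / 2) := by
  have hε4 : 0 < ε / 2 / 2 := by linarith
  have hne := coverSet_nonempty_of_compact (T_compact f L hL (L (ε / 2 / 2)))
    (show (0:ℝ) < ε / 2 by linarith)
  obtain ⟨s, hcard, hsub, hcov⟩ := Nat.sInf_mem hne
  have : coverNumSet (hull f) ε ≤ s.card := by
    apply coverNum_le
    · exact hsub.trans (T_subset_hull _)
    · intro x hx
      obtain ⟨y, ⟨σ, rfl⟩, hdy⟩ := Metric.mem_closure_iff.mp hx (ε / 4) (by linarith)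
      obtain ⟨u, hu, hdu⟩ := translate_dense f L hL hε4 σ
      obtain ⟨c, hc, hdc⟩ := hcov (translateBCF f u) (Set.mem_image_of_mem _ hu)
      refine ⟨c, hc, ?_⟩
      calc dist x c ≤ dist x (translateBCF f σ) + dist (translateBCF f σ) (translateBCF f u)
            + dist (translateBCF f u) c := dist_triangle4 _ _ _ _
        _ ≤ ε / 4 + ε / 2 / 2 + ε / 2 := add_le_add (add_le_add hdy.le hdu.le) hdc
        _ = ε := by ring
  exact this.trans_eq hcard

end CoverLemmas

/-! ### Analytic transfer lemmas -/

lemma log_nat_mono {m n : ℕ} (h : m ≤ n) : Real.log m ≤ Real.log n := by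
  rcases Nat.eq_zero_or_pos m with hm | hm
  · subst hm
    simp only [Nat.cast_zero, Real.log_zero]
    exact Real.log_natCast_nonneg n
  · exact Real.log_le_log (by exact_mod_cast hm) (by exact_mod_cast h)

lemma tendsto_const_mul_nhdsGT {c : ℝ} (hc : 0 < c) :
    Tendsto (fun ε : ℝ => c * ε) (𝓝[>] 0) (𝓝[>] 0) := by
  rw [tendsto_nhdsWithin_iff]
  constructor
  · have h : Tendsto (fun ε : ℝ => c * ε) (𝓝 0) (𝓝 (c * 0)) :=
      (continuous_const.mul continuous_id).tendsto 0
    rw [mul_zero] at h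
    exact h.mono_left nhdsWithin_le_nhds
  · exact eventually_mem_nhdsWithin.mono (fun ε hε => mul_pos hc hε)

lemma log_one_div_pos {ε : ℝ} (h0 : 0 < ε) (h1 : ε < 1) : 0 < Real.log (1 / ε) := by
  rw [one_div]
  exact Real.log_pos (one_lt_inv_iff₀.mpr ⟨h0, h1⟩)

lemma tendsto_log_one_div_atTop : Tendsto (fun ε : ℝ => Real.log (1 / ε)) (𝓝[>] 0) atTop := by
  have h : Tendsto Real.log (𝓝[>] (0:ℝ)) atBot := Real.tendsto_log_nhdsGT_zero
  refine (tendsto_neg_atTop_iff.mpr h).congr (fun ε => ?_)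
  rw [one_div, Real.log_inv]

lemma tendsto_ratio (c : ℝ) :
    Tendsto (fun ε : ℝ => (Real.log (1/ε) - Real.log c) / Real.log (1/ε)) (𝓝[>] 0) (𝓝 1) := by
  have h1 : Tendsto (fun ε : ℝ => (Real.log (1/ε))⁻¹) (𝓝[>] 0) (𝓝 0) :=
    tendsto_log_one_div_atTop.inv_tendsto_atTop
  have h2 : Tendsto (fun ε : ℝ => 1 - Real.log c * (Real.log (1/ε))⁻¹) (𝓝[>] 0) (𝓝 1) := by
    have := (h1.const_mul (Real.log c)).const_sub 1
    simpa using this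
  apply h2.congr'
  filter_upwards [tendsto_log_one_div_atTop.eventually_gt_atTop 0] with ε hε
  field_simp

lemma log_one_div_scale {c ε : ℝ} (hc : 0 < c) (hε : 0 < ε) :
    Real.log (1 / (c * ε)) = Real.log (1 / ε) - Real.log c := by
  rw [one_div, one_div, Real.log_inv, Real.log_inv, Real.log_mul hc.ne' hε.ne']
  ring

lemma transfer_lower (M K : ℝ → ℕ) {c : ℝ} (hc : 0 < c)
    (hMK : ∀ ε > (0:ℝ), K (c * ε) ≤ M ε) {δ : ℝ} (hδ : 0 < δ) (a : ℝ)
    (ha : ∀ᶠ ε in 𝓝[>](0:ℝ), a ≤ Real.log (K ε) / Real.log (1/ε)) :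
    ∀ᶠ ε in 𝓝[>](0:ℝ), a - δ ≤ Real.log (M ε) / Real.log (1/ε) := by
  have ha' := (tendsto_const_mul_nhdsGT hc).eventually ha
  have hsmall : ∀ᶠ ε in 𝓝[>](0:ℝ), ε < 1 ∧ c * ε < 1 := by
    have h1 : ∀ᶠ ε in 𝓝[>](0:ℝ), ε < 1 :=
      eventually_nhdsWithin_of_eventually_nhds (eventually_lt_nhds one_pos)
    exact h1.and ((tendsto_const_mul_nhdsGT hc).eventually
      (eventually_nhdsWithin_of_eventually_nhds (eventually_lt_nhds one_pos)))
  have hratio : ∀ᶠ ε in 𝓝[>](0:ℝ),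
      a - δ < a * ((Real.log (1/ε) - Real.log c) / Real.log (1/ε)) := by
    have ht : Tendsto (fun ε : ℝ => a * ((Real.log (1/ε) - Real.log c) / Real.log (1/ε)))
        (𝓝[>] 0) (𝓝 a) := by simpa using (tendsto_ratio c).const_mul a
    exact ht.eventually (eventually_gt_nhds (by linarith))
  filter_upwards [ha', hsmall, hratio, eventually_mem_nhdsWithin] with ε hKa hsm hrt hε
  have hε0 : (0:ℝ) < ε := hε
  have hl : 0 < Real.log (1/ε) := log_one_div_pos hε0 hsm.1
  have hlc : 0 < Real.log (1/(c*ε)) := log_one_div_pos (mul_pos hc hε0) hsm.2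
  have hKa' : a * Real.log (1/(c*ε)) ≤ Real.log (K (c*ε)) := by
    rw [← le_div_iff₀ hlc]; exact hKa
  have hMlog : Real.log (K (c*ε)) ≤ Real.log (M ε) := log_nat_mono (hMK ε hε0)
  have hdiv : a * Real.log (1/(c*ε)) / Real.log (1/ε) ≤ Real.log (M ε) / Real.log (1/ε) :=
    (div_le_div_iff_of_pos_right hl).mpr (hKa'.trans hMlog)
  have hcal : a - δ < Real.log (M ε) / Real.log (1/ε) :=
    calc a - δ < a * ((Real.log (1/ε) - Real.log c) / Real.log (1/ε)) := hrt
      _ = a * Real.log (1/(c*ε)) / Real.log (1/ε) := by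
          rw [log_one_div_scale hc hε0, mul_div_assoc]
      _ ≤ Real.log (M ε) / Real.log (1/ε) := hdiv
  exact hcal.le

lemma transfer_upper (M K : ℝ → ℕ) {c : ℝ} (hc : 0 < c)
    (hMK : ∀ ε > (0:ℝ), M ε ≤ K (c * ε)) {δ : ℝ} (hδ : 0 < δ) (a : ℝ)
    (ha : ∀ᶠ ε in 𝓝[>](0:ℝ), Real.log (K ε) / Real.log (1/ε) ≤ a) :
    ∀ᶠ ε in 𝓝[>](0:ℝ), Real.log (M ε) / Real.log (1/ε) ≤ a + δ := by
  have ha' := (tendsto_const_mul_nhdsGT hc).eventually ha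
  have hsmall : ∀ᶠ ε in 𝓝[>](0:ℝ), ε < 1 ∧ c * ε < 1 := by
    have h1 : ∀ᶠ ε in 𝓝[>](0:ℝ), ε < 1 :=
      eventually_nhdsWithin_of_eventually_nhds (eventually_lt_nhds one_pos)
    exact h1.and ((tendsto_const_mul_nhdsGT hc).eventually
      (eventually_nhdsWithin_of_eventually_nhds (eventually_lt_nhds one_pos)))
  have hratio : ∀ᶠ ε in 𝓝[>](0:ℝ),
      a * ((Real.log (1/ε) - Real.log c) / Real.log (1/ε)) < a + δ := by
    have ht : Tendsto (fun ε : ℝ => a * ((Real.log (1/ε) - Real.log c) / Real.log (1/ε)))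
        (𝓝[>] 0) (𝓝 a) := by simpa using (tendsto_ratio c).const_mul a
    exact ht.eventually (eventually_lt_nhds (by linarith))
  filter_upwards [ha', hsmall, hratio, eventually_mem_nhdsWithin] with ε hKa hsm hrt hε
  have hε0 : (0:ℝ) < ε := hε
  have hl : 0 < Real.log (1/ε) := log_one_div_pos hε0 hsm.1
  have hlc : 0 < Real.log (1/(c*ε)) := log_one_div_pos (mul_pos hc hε0) hsm.2
  have hKa' : Real.log (K (c*ε)) ≤ a * Real.log (1/(c*ε)) := by
    rw [← div_le_iff₀ hlc]; exact hKa
  have hMlog : Real.log (M ε) ≤ Real.log (K (c*ε)) := log_nat_mono (hMK ε hε0)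
  calc Real.log (M ε) / Real.log (1/ε) ≤ a * Real.log (1/(c*ε)) / Real.log (1/ε) :=
        (div_le_div_iff_of_pos_right hl).mpr (hMlog.trans hKa')
    _ = a * ((Real.log (1/ε) - Real.log c) / Real.log (1/ε)) := by
        rw [log_one_div_scale hc hε0, mul_div_assoc]
    _ ≤ a + δ := hrt.le

lemma ev_nonneg (M : ℝ → ℕ) :
    ∀ᶠ ε in 𝓝[>](0:ℝ), 0 ≤ Real.log (M ε) / Real.log (1/ε) := by
  filter_upwards [eventually_nhdsWithin_of_eventually_nhds (eventually_lt_nhds one_pos),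
    eventually_mem_nhdsWithin] with ε h1 h0
  exact div_nonneg (Real.log_natCast_nonneg _) (log_one_div_pos h0 h1).le

lemma sSup_eq_sSup_transfer {Su Sv : Set ℝ} (h0u : (0:ℝ) ∈ Su) (h0v : (0:ℝ) ∈ Sv)
    (huv : ∀ δ > (0:ℝ), ∀ a ∈ Su, a - δ ∈ Sv) (hvu : ∀ δ > (0:ℝ), ∀ a ∈ Sv, a - δ ∈ Su) :
    sSup Su = sSup Sv := by
  have key : ∀ (S T : Set ℝ), (0:ℝ) ∈ S → BddAbove S → BddAbove T →
      (∀ δ > (0:ℝ), ∀ a ∈ S, a - δ ∈ T) → sSup S ≤ sSup T := by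
    intro S T h0 hbS hbT htr
    apply csSup_le ⟨0, h0⟩
    intro a ha
    apply le_of_forall_pos_le_add
    intro δ hδ
    have : a - δ ≤ sSup T := le_csSup hbT (htr δ hδ a ha)
    linarith
  have hbdd : BddAbove Su ↔ BddAbove Sv := by
    constructor
    · rintro ⟨b, hb⟩
      refine ⟨b + 1, fun a ha => ?_⟩
      have := hb (hvu 1 one_pos a ha)
      linarith [this]
    · rintro ⟨b, hb⟩
      refine ⟨b + 1, fun a ha => ?_⟩
      have := hb (huv 1 one_pos a ha)
      linarith [this]
  by_cases hb : BddAbove Su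
  · exact le_antisymm (key Su Sv h0u hb (hbdd.mp hb) huv) (key Sv Su h0v (hbdd.mp hb) hb hvu)
  · rw [Real.sSup_of_not_bddAbove hb, Real.sSup_of_not_bddAbove (fun h => hb (hbdd.mpr h))]

lemma sInf_eq_sInf_transfer {Tu Tv : Set ℝ} (h0u : ∀ a ∈ Tu, (0:ℝ) ≤ a)
    (h0v : ∀ a ∈ Tv, (0:ℝ) ≤ a)
    (huv : ∀ δ > (0:ℝ), ∀ a ∈ Tu, a + δ ∈ Tv) (hvu : ∀ δ > (0:ℝ), ∀ a ∈ Tv, a + δ ∈ Tu) :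
    sInf Tu = sInf Tv := by
  have key : ∀ (S T : Set ℝ), S.Nonempty → (∀ a ∈ T, (0:ℝ) ≤ a) →
      (∀ δ > (0:ℝ), ∀ a ∈ S, a + δ ∈ T) → sInf T ≤ sInf S := by
    intro S T hSne h0T htr
    apply le_of_forall_pos_le_add
    intro δ hδ
    have h1 : ∀ a ∈ S, sInf T - δ ≤ a := by
      intro a ha
      have : sInf T ≤ a + δ := csInf_le ⟨0, fun x hx => h0T x hx⟩ (htr δ hδ a ha)
      linarith
    have := le_csInf hSne h1
    linarith
  rcases Set.eq_empty_or_nonempty Tu with hu | hu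
  · have hv : Tv = ∅ := by
      rcases Set.eq_empty_or_nonempty Tv with h | ⟨a, ha⟩
      · exact h
      · exact absurd (hvu 1 one_pos a ha) (by simp [hu])
    rw [hu, hv]
  · have hv : Tv.Nonempty := ⟨_, huv 1 one_pos _ hu.choose_spec⟩
    exact le_antisymm (key Tv Tu hv h0u hvu) (key Tu Tv hu h0v huv)

/-! ### Main theorem -/

/-- N_{2ε}^{a.p.} ≤ N_ε(H(f)) ≤ N_{ε/2}^{a.p.}, and consequently the lower
and upper box dimensions of the hull equal the liminf resp. limsup of
ln N_ε^{a.p.} / ln(1/ε). -/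
theorem coverNum_hull_comparison (f : BoundedContinuousFunction ℝ ℂ) (L : ℝ → ℝ)
    (hL : ∀ ε > (0 : ℝ), ∀ a : ℝ, ∃ τ ∈ Set.Icc a (a + L ε), dist (translateBCF f τ) f < ε) :
    (∀ ε > (0 : ℝ),
      Nap f L (2 * ε) ≤ coverNumSet (hull f) ε ∧
        coverNumSet (hull f) ε ≤ Nap f L (ε / 2)) ∧
      lowerBoxDimSet (hull f) =
        liminf (fun ε : ℝ => Real.log (Nap f L ε) / Real.log (1 / ε)) (𝓝[>] 0) ∧
      upperBoxDimSet (hull f) =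
        limsup (fun ε : ℝ => Real.log (Nap f L ε) / Real.log (1 / ε)) (𝓝[>] 0) := by
  have hb : ∀ ε > (0:ℝ), coverNumSet (hull f) ε ≤ Nap f L ((1/2) * ε) := by
    intro ε hε
    have h := coverNum_le_nap f L hL hε
    have h3 : (1/2 : ℝ) * ε = ε / 2 := by ring
    rwa [h3]
  have ha : ∀ ε > (0:ℝ), Nap f L (2 * ε) ≤ coverNumSet (hull f) ε :=
    fun ε hε => nap_le_coverNum f L hL hε
  have hc : ∀ ε > (0:ℝ), coverNumSet (hull f) (2 * ε) ≤ Nap f L ε := by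
    intro ε hε
    have h := coverNum_le_nap f L hL (show (0:ℝ) < 2 * ε by linarith)
    have h2 : 2 * ε / 2 = ε := by ring
    rwa [h2] at h
  have hd : ∀ ε > (0:ℝ), Nap f L ε ≤ coverNumSet (hull f) ((1/2) * ε) := by
    intro ε hε
    have h := nap_le_coverNum f L hL (show (0:ℝ) < ε / 2 by linarith)
    have h2 : 2 * (ε / 2) = ε := by ring
    rw [h2] at h
    have h3 : (1/2 : ℝ) * ε = ε / 2 := by ring
    rwa [h3]
  refine ⟨fun ε hε => ⟨ha ε hε, coverNum_le_nap f L hL hε⟩, ?_, ?_⟩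
  · -- liminf
    rw [lowerBoxDimSet, liminf_eq, liminf_eq]
    apply sSup_eq_sSup_transfer
    · exact ev_nonneg (fun ε => coverNumSet (hull f) ε)
    · exact ev_nonneg (fun ε => Nap f L ε)
    · intro δ hδ a haev
      exact transfer_lower (fun ε => Nap f L ε) (fun ε => coverNumSet (hull f) ε)
        two_pos hc hδ a haev
    · intro δ hδ a haev
      exact transfer_lower (fun ε => coverNumSet (hull f) ε) (fun ε => Nap f L ε)
        two_pos ha hδ a haev
  · -- limsup
    rw [upperBoxDimSet, limsup_eq, limsup_eq]
    apply sInf_eq_sInf_transfer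
    · intro a haev
      obtain ⟨x, h1, h2⟩ := ((ev_nonneg (fun ε => coverNumSet (hull f) ε)).and haev).exists
      exact h1.trans h2
    · intro a haev
      obtain ⟨x, h1, h2⟩ := ((ev_nonneg (fun ε => Nap f L ε)).and haev).exists
      exact h1.trans h2
    · intro δ hδ a haev
      exact transfer_upper (fun ε => Nap f L ε) (fun ε => coverNumSet (hull f) ε)
        one_half_pos hd hδ a haev
    · intro δ hδ a haev
      exact transfer_upper (fun ε => coverNumSet (hull f) ε) (fun ε => Nap f L ε)
        one_half_pos hb hδ a haev
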